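/- For every odd integer k ≥ 3, all reals s_3, s_5, …, s_k (one for each odd index between 3 and k) and every positive real δ > 0, there exists an integer m and reals ω_1, …, ω_m such that Σ_{i∈[m]} ω_i^ℓ = s_ℓ for every odd integer ℓ with 3 ≤ ℓ ≤ k, and Σ_{i∈[m]} ω_i^{k+1} ≤ δ. -/

import Mathlib

open MeasureTheory

/-- A kernel: a bounded measurable symmetric real function (its values on `[0,1]²` are the
relevant ones). -/
structure Kernel : Type where
  toFun : ℝ → ℝ → ℝ
  symm : ∀ x y, toFun x y = toFun y x
  measurable : Measurable (Function.uncurry toFun)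
  bounded : ∃ C : ℝ, ∀ x y, |toFun x y| ≤ C

/-- A kernel is nonzero if it is not a.e. zero on `[0,1]²`. -/
def Kernel.Nonzero (U : Kernel) : Prop :=
  ¬ (∀ᵐ p : ℝ × ℝ ∂(volume.restrict ((Set.Icc (0:ℝ) 1) ×ˢ (Set.Icc (0:ℝ) 1))),
      U.toFun p.1 p.2 = 0)

/-- A kernel is balanced if its marginals vanish a.e. -/
def Kernel.Balanced (U : Kernel) : Prop :=
  ∀ᵐ x ∂(volume.restrict (Set.Icc (0:ℝ) 1)), (∫ y in Set.Icc (0:ℝ) 1, U.toFun x y) = 0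

/-- The product of the kernel values over the edges of a graph. -/
noncomputable def edgeProd {V : Type} (H : SimpleGraph V) (U : Kernel) (x : V → ℝ) : ℝ :=
  ∏ᶠ e ∈ H.edgeSet, Sym2.lift ⟨fun u v => U.toFun (x u) (x v), fun u v => U.symm (x u) (x v)⟩ e

/-- The homomorphism density `t(H, U)` of a finite simple graph in a kernel. -/
noncomputable def homDensity {V : Type} [Fintype V] (H : SimpleGraph V) (U : Kernel) : ℝ :=
  ∫ x in (Set.univ.pi fun _ : V => Set.Icc (0:ℝ) 1), edgeProd H U x

open Classical in
/-- The rooted homomorphism density `t^H_U(z)` of a graph `H` rooted at `w`. -/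
noncomputable def rootedDensity {V : Type} [Fintype V] (H : SimpleGraph V) (w : V)
    (U : Kernel) (z : ℝ) : ℝ :=
  ∫ x in (Set.univ.pi fun _ : {v : V // v ≠ w} => Set.Icc (0:ℝ) 1),
    edgeProd H U (fun v => if h : v = w then z else x ⟨v, h⟩)

/-- A bundled finite simple graph. -/
structure FinGraph : Type 1 where
  V : Type
  fintypeV : Fintype V
  G : SimpleGraph V

attribute [instance] FinGraph.fintypeV

def FinGraph.of {V : Type} [h : Fintype V] (G : SimpleGraph V) : FinGraph := ⟨V, h, G⟩

noncomputable def FinGraph.density (G : FinGraph) (U : Kernel) : ℝ := homDensity G.G U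

/-- Number of edges of a bundled finite graph. -/
noncomputable def FinGraph.edges (G : FinGraph) : ℕ := G.G.edgeSet.ncard

instance finiteSubgraph {V : Type} [Finite V] (G : SimpleGraph V) : Finite G.Subgraph := by
  classical
  exact Finite.of_injective (fun G' => (G'.verts, G'.Adj))
    (fun a b h => SimpleGraph.Subgraph.ext (congrArg Prod.fst h) (congrArg Prod.snd h))

open Classical in
/-- The multiset of all subgraphs of `G` having exactly `l` edges. -/
noncomputable def FinGraph.subs (G : FinGraph) (l : ℕ) : Multiset FinGraph :=
  ((Set.toFinite {G' : G.G.Subgraph | G'.edgeSet.ncard = l}).toFinset.val).map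
    fun G' => FinGraph.of G'.coe

/-- `D` is an `l`-deck: a multiset of graphs each with exactly `l` edges. -/
def IsDeck (D : Multiset FinGraph) (l : ℕ) : Prop := ∀ G ∈ D, G.edges = l

/-- The `l`-deck of a deck `D`: all `l`-edge subgraphs of the graphs of `D`. -/
noncomputable def subDeck (D : Multiset FinGraph) (l : ℕ) : Multiset FinGraph :=
  D.bind fun G => G.subs l

/-- `s_D(H)`: the number of subgraphs isomorphic to `H` of the graphs in `D`. -/
noncomputable def sD (D : Multiset FinGraph) (H : FinGraph) : ℕ :=
  (D.map fun G => Set.ncard {G' : G.G.Subgraph | Nonempty (G'.coe ≃g H.G)}).sum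

/-- The coefficient `c^D_{U,l} = Σ_{G ∈ D} Σ_{H' ∈ G[l]} t(H', U)`. -/
noncomputable def coeff (D : Multiset FinGraph) (U : Kernel) (l : ℕ) : ℝ :=
  ((subDeck D l).map fun H => H.density U).sum

/-- All the coefficients `c^D_{U,2}, c^D_{U,4}, …, c^D_{U,l}` vanish. -/
def AllCoeffZero (D : Multiset FinGraph) (U : Kernel) (l : ℕ) : Prop :=
  ∀ k, Even k → 0 < k → k ≤ l → coeff D U k = 0

/-- Among `c^D_{U,2}, c^D_{U,4}, …, c^D_{U,l}` not all vanish and the first nonzero one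
is positive. -/
def FirstNonzeroPos (D : Multiset FinGraph) (U : Kernel) (l : ℕ) : Prop :=
  ∃ k, Even k ∧ 0 < k ∧ k ≤ l ∧ 0 < coeff D U k ∧
    ∀ j, Even j → 0 < j → j < k → coeff D U j = 0

/-- Among `c^D_{U,2}, c^D_{U,4}, …, c^D_{U,l}` not all vanish and the first nonzero one
is negative. -/
def FirstNonzeroNeg (D : Multiset FinGraph) (U : Kernel) (l : ℕ) : Prop :=
  ∃ k, Even k ∧ 0 < k ∧ k ≤ l ∧ coeff D U k < 0 ∧
    ∀ j, Even j → 0 < j → j < k → coeff D U j = 0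

def ClassI (D : Multiset FinGraph) (l : ℕ) : Prop :=
  ∀ U : Kernel, U.Nonzero → FirstNonzeroPos D U l

def ClassII (D : Multiset FinGraph) (l : ℕ) : Prop :=
  ∃ U : Kernel, FirstNonzeroNeg D U l

def ClassIII (D : Multiset FinGraph) (l : ℕ) : Prop :=
  (∃ U : Kernel, U.Nonzero ∧ AllCoeffZero D U l) ∧
  ∀ U : Kernel, AllCoeffZero D U l ∨ FirstNonzeroPos D U l

/-- The cycle `C_n` as a bundled graph. -/
def cycleF (n : ℕ) : FinGraph := FinGraph.of (SimpleGraph.cycleGraph n)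

/-- The path `P_n` with `n` edges as a bundled graph. -/
def pathF (n : ℕ) : FinGraph := FinGraph.of (SimpleGraph.pathGraph (n+1))

/-- Gluing two graphs by identifying the vertex `v` of `G` with the vertex `w` of `H`. -/
def glue {V W : Type} (G : SimpleGraph V) (H : SimpleGraph W) (v : V) (w : W) :
    SimpleGraph (V ⊕ {x : W // x ≠ w}) where
  Adj a b :=
    Sum.elim (fun a => Sum.elim (fun b => G.Adj a b) (fun b => a = v ∧ H.Adj w b.1) b)
             (fun a => Sum.elim (fun b => b = v ∧ H.Adj w a.1) (fun b => H.Adj a.1 b.1) b) a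
  symm := by
    constructor
    rintro (a | a) (b | b) h
    · exact G.adj_symm h
    · exact h
    · exact h
    · exact H.adj_symm h
  loopless := by
    constructor
    rintro (a | a) h
    · exact G.loopless.irrefl a h
    · exact H.loopless.irrefl a.1 h

/-- Disjoint union of two simple graphs. -/
def disjSum {V W : Type} (G : SimpleGraph V) (H : SimpleGraph W) : SimpleGraph (V ⊕ W) where
  Adj a b :=
    Sum.elim (fun a => Sum.elim (fun b => G.Adj a b) (fun _ => False) b)
             (fun a => Sum.elim (fun _ => False) (fun b => H.Adj a b) b) a
  symm := by
    constructor
    rintro (a | a) (b | b) h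
    · exact G.adj_symm h
    · exact h.elim
    · exact h.elim
    · exact H.adj_symm h
  loopless := by
    constructor
    rintro (a | a) h
    · exact G.loopless.irrefl a h
    · exact H.loopless.irrefl a h

/-- Disjoint union `G ∪ H` of bundled graphs. -/
noncomputable def FinGraph.disjU (G H : FinGraph) : FinGraph := FinGraph.of (disjSum G.G H.G)

open Classical in
/-- `C_k ⊕ P_n ⊕ C_l`: two cycles joined by a path with `n` edges; for `n = 0` this is
`C_k ⊕ C_l`, two cycles sharing one vertex. (Junk value if `k = 0` or `l = 0`.) -/
noncomputable def cpcF (k n l : ℕ) : FinGraph :=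
  if h : 0 < k ∧ 0 < l then
    let A := glue (SimpleGraph.cycleGraph k) (SimpleGraph.pathGraph (n+1)) ⟨0, h.1⟩ 0
    let ep : Fin k ⊕ {x : Fin (n+1) // x ≠ 0} :=
      if hn : n = 0 then Sum.inl ⟨0, h.1⟩
      else Sum.inr ⟨Fin.last n, fun hc => hn (by simpa using congrArg Fin.val hc)⟩
    FinGraph.of (glue A (SimpleGraph.cycleGraph l) ep ⟨0, h.2⟩)
  else FinGraph.of (⊥ : SimpleGraph (Fin 0))

/-!
Odd power sums can be prescribed independently while a higher power sum is kept small.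
The key move replaces a multiset `M` by `M + 2 ^ j • (-M / 2)`: this multiplies the `p`-th
power sum by `1 + 2 ^ j (-1/2) ^ p`, which vanishes for `p = j` odd and for no other odd `p`.
Applying it to `{1}` for all odd exponents `j ≠ ℓ` of interest isolates the `ℓ`-th power sum.
Taking `N` copies of the result scaled by `a` with `N a ^ ℓ` prescribed, and `N` large so that
`a` is small, hits the target at `ℓ` while every power sum of higher order becomes small.
Adding up such multisets, one for each `ℓ`, proves the theorem.
-/

open Filter Topology

section PowerSum

variable {R : Type*} [CommSemiring R]

def powerSum (M : Multiset R) (p : ℕ) : R := (M.map (· ^ p)).sum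

@[simp]
lemma powerSum_zero (p : ℕ) : powerSum (0 : Multiset R) p = 0 := by
  simp [powerSum]

@[simp]
lemma powerSum_singleton (a : R) (p : ℕ) : powerSum {a} p = a ^ p := by
  simp [powerSum]

@[simp]
lemma powerSum_add (M N : Multiset R) (p : ℕ) :
    powerSum (M + N) p = powerSum M p + powerSum N p := by
  simp [powerSum]

@[simp]
lemma powerSum_nsmul (n : ℕ) (M : Multiset R) (p : ℕ) :
    powerSum (n • M) p = n * powerSum M p := by
  simp [powerSum, Multiset.map_nsmul, Multiset.sum_nsmul, nsmul_eq_mul]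

@[simp]
lemma powerSum_map_mul_left (c : R) (M : Multiset R) (p : ℕ) :
    powerSum (M.map (c * ·)) p = c ^ p * powerSum M p := by
  simp [powerSum, Multiset.map_map, mul_pow, Multiset.sum_map_mul_left]

lemma sum_fin_toList_getElem_pow (M : Multiset R) (p : ℕ) :
    ∑ i : Fin M.toList.length, M.toList[i.1] ^ p = powerSum M p :=
  (Fin.sum_univ_fun_getElem M.toList (· ^ p)).trans (Multiset.sum_map_toList _ _)

end PowerSum

noncomputable def killFactor (j p : ℕ) : ℝ := 1 + 2 ^ j * (-2⁻¹) ^ p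

lemma killFactor_self {j : ℕ} (hj : Odd j) : killFactor j j = 0 := by
  rw [killFactor, hj.neg_pow, mul_neg, ← mul_pow]
  norm_num

lemma killFactor_ne_zero {j p : ℕ} (hp : Odd p) (hjp : j ≠ p) : killFactor j p ≠ 0 := by
  rw [killFactor, hp.neg_pow, mul_neg, ← sub_eq_add_neg, sub_ne_zero, inv_pow,
    ← div_eq_mul_inv, ne_comm, ne_eq, div_eq_one_iff_eq (by positivity)]
  exact_mod_cast (Nat.pow_right_injective le_rfl).ne hjp

lemma exists_powerSum_eq_prod_killFactor (S : Finset ℕ) :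
    ∃ M : Multiset ℝ, ∀ p, powerSum M p = ∏ j ∈ S, killFactor j p := by
  classical
  induction S using Finset.induction_on with
  | empty => exact ⟨{1}, by simp⟩
  | insert j S hj ih =>
    obtain ⟨M, hM⟩ := ih
    refine ⟨M + 2 ^ j • M.map ((-2⁻¹) * ·), fun p => ?_⟩
    simp only [powerSum_add, powerSum_nsmul, powerSum_map_mul_left, hM,
      Finset.prod_insert hj, killFactor]
    push_cast
    ring

lemma Odd.pow_surjective {ℓ : ℕ} (hℓ : Odd ℓ) : Function.Surjective fun a : ℝ => a ^ ℓ := by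
  have hℓ0 : ℓ ≠ 0 := hℓ.pos.ne'
  refine (continuous_pow ℓ).surjective (tendsto_pow_atTop hℓ0) ?_
  have := tendsto_neg_atTop_atBot.comp
    ((tendsto_pow_atTop hℓ0).comp (tendsto_neg_atBot_atTop (G := ℝ)))
  simpa [Function.comp_def, hℓ.neg_pow] using this

lemma exists_nat_mul_pow_eq_of_mem_nhds {ℓ : ℕ} (hℓ : Odd ℓ) (x : ℝ) {U : Set ℝ}
    (hU : U ∈ 𝓝 0) : ∃ (N : ℕ) (a : ℝ), N * a ^ ℓ = x ∧ a ∈ U := by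
  obtain ⟨η, hη, hηU⟩ := Metric.mem_nhds_iff.mp hU
  set N : ℕ := ⌊|x| / η ^ ℓ⌋₊ + 1
  have hN : (0 : ℝ) < N := by positivity
  obtain ⟨a, ha⟩ : ∃ a : ℝ, a ^ ℓ = x / N := hℓ.pow_surjective _
  refine ⟨N, a, by rw [ha, mul_div_cancel₀ _ hN.ne'], hηU ?_⟩
  have hxN : |x| < N * η ^ ℓ := by
    rw [← div_lt_iff₀ (by positivity)]
    exact_mod_cast Nat.lt_floor_add_one _
  have : |a| ^ ℓ < η ^ ℓ := by
    rwa [← abs_pow, ha, abs_div, Nat.abs_cast, div_lt_iff₀' hN]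
  simpa using (pow_lt_pow_iff_left₀ (abs_nonneg a) hη.le hℓ.pos.ne').mp this

lemma exists_powerSum_eq_of_notMem {ℓ e : ℕ} {S : Finset ℕ} (hℓ : Odd ℓ)
    (hS : ∀ j ∈ S, Odd j) (hℓS : ℓ ∉ S) (hℓe : ℓ < e) (t : ℝ) {δ : ℝ} (hδ : 0 < δ) :
    ∃ M : Multiset ℝ, powerSum M ℓ = t ∧ (∀ j ∈ S, powerSum M j = 0) ∧ |powerSum M e| ≤ δ := by
  obtain ⟨M, hM⟩ := exists_powerSum_eq_prod_killFactor S
  set C := ∏ j ∈ S, killFactor j ℓ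
  set D := ∏ j ∈ S, killFactor j e
  have hC : C ≠ 0 := Finset.prod_ne_zero_iff.mpr fun j hj =>
    killFactor_ne_zero hℓ (ne_of_mem_of_not_mem hj hℓS)
  have hsmall : Tendsto (fun a : ℝ => t / C * D * a ^ (e - ℓ)) (𝓝 0) (𝓝 0) := by
    simpa [zero_pow (Nat.sub_ne_zero_of_lt hℓe)] using
      ((continuous_pow (e - ℓ)).tendsto (0 : ℝ)).const_mul (t / C * D)
  obtain ⟨N, a, hNa, ha⟩ := exists_nat_mul_pow_eq_of_mem_nhds hℓ (t / C)
    (hsmall (Metric.closedBall_mem_nhds 0 hδ))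
  have hpow (p : ℕ) : powerSum (N • M.map (a * ·)) p = N * a ^ p * ∏ j ∈ S, killFactor j p := by
    simp only [powerSum_nsmul, powerSum_map_mul_left, hM, mul_assoc]
  refine ⟨N • M.map (a * ·), ?_, fun j hj => ?_, ?_⟩
  · rw [hpow, hNa, div_mul_cancel₀ _ hC]
  · rw [hpow, Finset.prod_eq_zero (f := (killFactor · j)) hj (killFactor_self (hS j hj)),
      mul_zero]
  · have he : a ^ e = a ^ ℓ * a ^ (e - ℓ) := by rw [← pow_add, Nat.add_sub_cancel' hℓe.le]
    have : powerSum (N • M.map (a * ·)) e = t / C * D * a ^ (e - ℓ) := by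
      rw [hpow, he, ← hNa]
      ring
    rwa [Set.mem_preimage, Metric.mem_closedBall, dist_zero_right, Real.norm_eq_abs, ← this] at ha

theorem exists_powerSum_eq_of_forall_odd {L : Finset ℕ} {e : ℕ} (hL : ∀ ℓ ∈ L, Odd ℓ)
    (hLe : ∀ ℓ ∈ L, ℓ < e) (s : ℕ → ℝ) {δ : ℝ} (hδ : 0 < δ) :
    ∃ M : Multiset ℝ, (∀ ℓ ∈ L, powerSum M ℓ = s ℓ) ∧ |powerSum M e| ≤ δ := by
  classical
  induction L using Finset.induction_on generalizing δ with
  | empty => exact ⟨0, by simp, by simpa using hδ.le⟩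
  | insert ℓ L hℓL ih =>
    obtain ⟨M₀, hM₀, hM₀e⟩ := ih (fun j hj => hL j (Finset.mem_insert_of_mem hj))
      (fun j hj => hLe j (Finset.mem_insert_of_mem hj)) (half_pos hδ)
    obtain ⟨M₁, hM₁ℓ, hM₁L, hM₁e⟩ := exists_powerSum_eq_of_notMem
      (hL ℓ (Finset.mem_insert_self ℓ L)) (fun j hj => hL j (Finset.mem_insert_of_mem hj)) hℓL
      (hLe ℓ (Finset.mem_insert_self ℓ L)) (s ℓ - powerSum M₀ ℓ) (half_pos hδ)
    refine ⟨M₀ + M₁, fun j hj => ?_, ?_⟩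
    · rcases Finset.mem_insert.mp hj with rfl | hj
      · rw [powerSum_add, hM₁ℓ, add_sub_cancel]
      · rw [powerSum_add, hM₀ j hj, hM₁L j hj, add_zero]
    · calc |powerSum (M₀ + M₁) e| ≤ |powerSum M₀ e| + |powerSum M₁ e| := by
            rw [powerSum_add]; exact abs_add_le _ _
        _ ≤ δ / 2 + δ / 2 := add_le_add hM₀e hM₁e
        _ = δ := add_halves δ

theorem sums_of_powers_general (k : ℕ) (s : ℕ → ℝ) (δ : ℝ) (hδ : 0 < δ) :
    ∃ (m : ℕ) (ω : Fin m → ℝ),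
      (∀ l : ℕ, Odd l → 3 ≤ l → l ≤ k → ∑ i, ω i ^ l = s l) ∧
      (∑ i, ω i ^ (k+1) ≤ δ) := by
  obtain ⟨M, hMs, hMe⟩ := exists_powerSum_eq_of_forall_odd (L := (Finset.Icc 3 k).filter Odd)
    (e := k + 1) (fun ℓ hℓ => (Finset.mem_filter.mp hℓ).2)
    (fun ℓ hℓ => Nat.lt_succ_of_le (Finset.mem_Icc.mp (Finset.mem_filter.mp hℓ).1).2) s hδ
  refine ⟨M.toList.length, fun i => M.toList[i.1], fun l hl h3l hlk => ?_, ?_⟩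
  · rw [sum_fin_toList_getElem_pow]
    exact hMs l (by simp [hl, h3l, hlk])
  · rw [sum_fin_toList_getElem_pow]
    exact (le_abs_self _).trans hMe

/-- For every odd `k ≥ 3`, all reals `s₃, s₅, …, s_k` and every `δ > 0`, there
exist `m` and reals `ω₁, …, ω_m` whose `ℓ`-th power sum equals `s_ℓ` for every odd
`3 ≤ ℓ ≤ k` and whose `(k+1)`-th power sum is at most `δ`. -/
theorem sums_of_powers (k : ℕ) (hk : Odd k) (h3 : 3 ≤ k) (s : ℕ → ℝ) (δ : ℝ) (hδ : 0 < δ) :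
    ∃ (m : ℕ) (ω : Fin m → ℝ),
      (∀ l : ℕ, Odd l → 3 ≤ l → l ≤ k → ∑ i, ω i ^ l = s l) ∧
      (∑ i, ω i ^ (k+1) ≤ δ) :=
  sums_of_powers_general k s δ hδ
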